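/- arXiv:1607.07173 — 6 statements merged into one kernel-verified Lean document; each statement's English description precedes it below -/
import Mathlib

section
/- For any S_1, S_2 ⊆ K^n: dim(S_1 ∪ S_2) = max(dim S_1, dim S_2). -/
open FirstOrder MvPolynomial

universe u

/-- `DiffPoly K n` is the ring of differential polynomials `K{Y_1,…,Y_n}`:
the polynomial ring over `K` in the indeterminates `Y_j^(r)` (`j : Fin n`, `r : ℕ`). -/
abbrev DiffPoly (K : Type u) [CommSemiring K] (n : ℕ) : Type u :=
  MvPolynomial (Fin n × ℕ) K

/-- The jet of a point `y ∈ K^n` with respect to a derivation `δ`: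
`Y_j^(r) ↦ δ^r (y_j)`. -/
def jet {K : Type u} (δ : K → K) {n : ℕ} (y : Fin n → K) : Fin n × ℕ → K :=
  fun jr => δ^[jr.2] (y jr.1)

/-- Evaluation `P(y)` of a differential polynomial at a point `y ∈ K^n`. -/
noncomputable def deval {K : Type u} [CommSemiring K] (δ : K → K) {n : ℕ}
    (y : Fin n → K) (P : DiffPoly K n) : K :=
  MvPolynomial.eval (jet δ y) P

/-- `P_1,…,P_m` are d-algebraically independent on `S ⊆ K^n`: there is no nonzero
`F ∈ K{X_1,…,X_m}` with `F(P_1(y),…,P_m(y)) = 0` for all `y ∈ S`. -/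
def DAlgIndepOn {K : Type u} [CommSemiring K] (δ : K → K) {n m : ℕ}
    (S : Set (Fin n → K)) (P : Fin m → DiffPoly K n) : Prop :=
  ¬ ∃ F : DiffPoly K m, F ≠ 0 ∧ ∀ y ∈ S, deval δ (fun i => deval δ y (P i)) F = 0

/-- The differential-algebraic dimension of `S ⊆ K^n`: the largest `m` for which some
`P_1,…,P_m ∈ K{Y_1,…,Y_n}` are d-algebraically independent on `S`, with `dim ∅ = ⊥ = -∞`. -/
noncomputable def ddim {K : Type u} [CommSemiring K] (δ : K → K) {n : ℕ}
    (S : Set (Fin n → K)) : WithBot ℕ∞ :=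
  sSup {d : WithBot ℕ∞ | S.Nonempty ∧
    ∃ m : ℕ, d = ((m : ℕ∞) : WithBot ℕ∞) ∧ ∃ P : Fin m → DiffPoly K n, DAlgIndepOn δ S P}

/-- The first-order language of differential rings `{0, 1, +, −, ·, δ}`. -/
def dLang : FirstOrder.Language where
  Functions := fun n => match n with
    | 0 => Fin 2
    | 1 => Fin 2
    | 2 => Fin 2
    | _ => Empty
  Relations := fun _ => Empty

/-- The differential ring `(K, δ)` as a structure for the language of differential rings. -/
noncomputable def dStructure {K : Type u} [Field K] (δ : K → K) : dLang.Structure K where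
  funMap := fun {n} f v => match n, f with
    | 0, ⟨0, _⟩ => 0
    | 0, ⟨_+1, _⟩ => 1
    | 1, ⟨0, _⟩ => -(v 0)
    | 1, ⟨_+1, _⟩ => δ (v 0)
    | 2, ⟨0, _⟩ => v 0 + v 1
    | 2, ⟨_+1, _⟩ => v 0 * v 1
    | (_+3), f => f.elim
  RelMap := fun {_} r _ => r.elim

/-- `S ⊆ K^α` is definable (with parameters from `K`) in the differential field `(K, δ)`,
viewed as a first-order structure in the language of differential rings. -/
def DefinableK {K : Type u} [Field K] (δ : K → K) {α : Type} (S : Set (α → K)) : Prop :=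
  ∃ (k : ℕ) (φ : dLang.Formula (α ⊕ Fin k)) (p : Fin k → K),
    S = {y | @FirstOrder.Language.Formula.Realize dLang K (dStructure δ) _ φ (Sum.elim y p)}

/-- A differential field extension of the differential field `(K, δ)`. -/
structure DiffFieldExt (K : Type u) [Field K] (δ : K → K) : Type (u+1) where
  L : Type u
  [fieldL : Field L]
  derL : L → L
  derL_add : ∀ a b : L, derL (a + b) = derL a + derL b
  derL_mul : ∀ a b : L, derL (a * b) = derL a * b + a * derL b
  emb : K →+* L
  emb_der : ∀ a : K, derL (emb a) = emb (δ a)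

attribute [instance] DiffFieldExt.fieldL

/-- Evaluation `P(y)` (as a ring morphism) of differential polynomials over `K` at a
point `y` of a differential field extension: `Y_j^(r) ↦ derL^r (y_j)`. -/
noncomputable def devalExtHom {K : Type u} [Field K] {δ : K → K} (E : DiffFieldExt K δ)
    {n : ℕ} (y : Fin n → E.L) : DiffPoly K n →+* E.L :=
  MvPolynomial.eval₂Hom E.emb (fun jr => E.derL^[jr.2] (y jr.1))

/-- Evaluation `P(y)` of a differential polynomial over `K` at a point of an extension. -/
noncomputable def devalExt {K : Type u} [Field K] {δ : K → K} (E : DiffFieldExt K δ)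
    {n : ℕ} (y : Fin n → E.L) (P : DiffPoly K n) : E.L :=
  devalExtHom E y P

/-- Elements `a_1,…,a_m` of a differential field extension of `K` are d-algebraically
independent over `K`. -/
def DAlgIndepTuple {K : Type u} [Field K] {δ : K → K} (E : DiffFieldExt K δ)
    {m : ℕ} (a : Fin m → E.L) : Prop :=
  ¬ ∃ F : DiffPoly K m, F ≠ 0 ∧ devalExt E a F = 0

/-- `P` has order at most `r⃗ = rv`, i.e. `P ∈ K[Y_j^(r) : r ≤ rv j]`. -/
def orderAtMost {K : Type u} [CommSemiring K] {n : ℕ} (rv : Fin n → ℕ)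
    (P : DiffPoly K n) : Prop :=
  P ∈ MvPolynomial.supported K {jr : Fin n × ℕ | jr.2 ≤ rv jr.1}

/-- `P_1,…,P_m` are strongly d-independent at `y`: for some `r⃗` bounding the orders of the
`P_i`, the `m × n` matrix with entries `(∂P_i/∂Y_j^(rv j))(y)` has rank `m`. -/
noncomputable def StrongDIndepAt {K : Type u} [Field K] {δ : K → K} (E : DiffFieldExt K δ)
    {n m : ℕ} (y : Fin n → E.L) (P : Fin m → DiffPoly K n) : Prop :=
  ∃ rv : Fin n → ℕ, (∀ i, orderAtMost rv (P i)) ∧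
    (Matrix.of fun (i : Fin m) (j : Fin n) =>
      devalExt E y (MvPolynomial.pderiv (j, rv j) (P i))).rank = m

/-- `P_1,…,P_m` are d-independent at `y` (with `𝔭 = {P : P(y) = 0}`): the images of the
Kähler differentials `d(∂^r P_i)` in `Ω_{R|K}/𝔭·Ω_{R|K}` are linearly independent over
`R/𝔭`, where `R = K{Y_1,…,Y_n}` and `derR` is the derivation of `R`. -/
def DIndepAt {K : Type u} [Field K] {n : ℕ} (derR : DiffPoly K n → DiffPoly K n)
    (p : Ideal (DiffPoly K n)) {m : ℕ} (P : Fin m → DiffPoly K n) : Prop :=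
  ∀ a : (Fin m × ℕ) →₀ DiffPoly K n,
    (a.sum fun ir c => c • (KaehlerDifferential.D K (DiffPoly K n)) (derR^[ir.2] (P ir.1)))
        ∈ p • (⊤ : Submodule (DiffPoly K n) (KaehlerDifferential K (DiffPoly K n))) →
    ∀ ir : Fin m × ℕ, a ir ∈ p

/-- A Kolchin closed subset of `K^n`: the common zero set of finitely many
differential polynomials. -/
def KolchinClosed {K : Type u} [CommSemiring K] (δ : K → K) {n : ℕ}
    (T : Set (Fin n → K)) : Prop :=
  ∃ (m : ℕ) (Ps : Fin m → DiffPoly K n), T = {y | ∀ i, deval δ y (Ps i) = 0}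

/-- The Kolchin closure of `S ⊆ K^n`: the intersection of all Kolchin closed supersets. -/
def kolchinClosure {K : Type u} [CommSemiring K] (δ : K → K) {n : ℕ}
    (S : Set (Fin n → K)) : Set (Fin n → K) :=
  ⋂₀ {T | KolchinClosed δ T ∧ S ⊆ T}

/-- An elementary extension of the differential field `(K, δ)` in the language of
differential rings. -/
structure DiffElemExt (K : Type u) [Field K] (δ : K → K) : Type (u+1) where
  L : Type u
  [fieldL : Field L]
  derL : L → L
  derL_add : ∀ a b : L, derL (a + b) = derL a + derL b
  derL_mul : ∀ a b : L, derL (a * b) = derL a * b + a * derL b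
  emb : K →+* L
  emb_der : ∀ a : K, derL (emb a) = emb (δ a)
  elementary : ∀ {k : ℕ} (φ : dLang.Formula (Fin k)) (v : Fin k → K),
    @FirstOrder.Language.Formula.Realize dLang L (dStructure derL) _ φ (⇑emb ∘ v) ↔
    @FirstOrder.Language.Formula.Realize dLang K (dStructure δ) _ φ v

attribute [instance] DiffElemExt.fieldL

/-- Substituting `y ∈ K^n` for the first `n` differential indeterminates of
`P ∈ K{Y_1,…,Y_n,Z}` gives the differential polynomial `P(y,Z) ∈ K{Z}`. -/
noncomputable def partialLast {K : Type u} [CommSemiring K] (δ : K → K) {n : ℕ}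
    (y : Fin n → K) (P : DiffPoly K (n+1)) : DiffPoly K 1 :=
  MvPolynomial.eval₂ MvPolynomial.C (fun jr =>
    if h : (jr.1 : ℕ) < n then MvPolynomial.C (δ^[jr.2] (y ⟨jr.1, h⟩))
    else MvPolynomial.X ((0 : Fin 1), jr.2)) P

/-- The differential field `(K, δ)` is d-bounded. -/
def DBounded {K : Type u} [Field K] (δ : K → K) : Prop :=
  ∀ (n : ℕ) (S : Set (Fin (n+1) → K)), DefinableK δ S →
    ∃ (k : ℕ) (P : Fin k → DiffPoly K (n+1)),
      ∀ y : Fin n → K,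
        ddim δ {z : Fin 1 → K | Fin.snoc y (z 0) ∈ S} = ((0 : ℕ∞) : WithBot ℕ∞) →
        ∃ i : Fin k, partialLast δ y (P i) ≠ 0 ∧
          ∀ z : K, Fin.snoc y z ∈ S → deval δ (Fin.snoc y z) (P i) = 0

namespace DAlgIndepOn

variable {K : Type u} [CommSemiring K] {δ : K → K} {n m : ℕ} {S T : Set (Fin n → K)}
  {P : Fin m → DiffPoly K n}

lemma mono (hST : S ⊆ T) (h : DAlgIndepOn δ S P) : DAlgIndepOn δ T P :=
  fun ⟨F, hF, hv⟩ => h ⟨F, hF, fun y hy => hv y (hST hy)⟩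

lemma nonempty [Nontrivial K] (h : DAlgIndepOn δ S P) : S.Nonempty :=
  Set.nonempty_iff_ne_empty.mpr fun hS => h ⟨1, one_ne_zero, fun _ hy => (hS ▸ hy).elim⟩

/-- A relation `F₁` on `S` and a relation `F₂` on `T` multiply to a relation `F₁ * F₂` on
`S ∪ T`, nonzero since `K{X_1,…,X_m}` has no zero divisors. -/
lemma union_iff [NoZeroDivisors K] :
    DAlgIndepOn δ (S ∪ T) P ↔ DAlgIndepOn δ S P ∨ DAlgIndepOn δ T P := by
  refine ⟨fun h => ?_, fun h => h.elim (mono Set.subset_union_left)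
    (mono Set.subset_union_right)⟩
  refine or_iff_not_and_not.mpr fun ⟨h₁, h₂⟩ => ?_
  obtain ⟨F₁, hF₁, hv₁⟩ := not_not.mp h₁
  obtain ⟨F₂, hF₂, hv₂⟩ := not_not.mp h₂
  refine h ⟨F₁ * F₂, mul_ne_zero hF₁ hF₂, fun y hy => ?_⟩
  simp only [deval, map_mul] at hv₁ hv₂ ⊢
  rcases hy with hy | hy
  · rw [hv₁ y hy, zero_mul]
  · rw [hv₂ y hy, mul_zero]

end DAlgIndepOn

lemma ddim_eq_sSup {K : Type u} [CommSemiring K] [Nontrivial K] (δ : K → K) {n : ℕ}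
    (S : Set (Fin n → K)) :
    ddim δ S = sSup {d : WithBot ℕ∞ |
      ∃ m : ℕ, d = ((m : ℕ∞) : WithBot ℕ∞) ∧ ∃ P : Fin m → DiffPoly K n, DAlgIndepOn δ S P} :=
  congrArg sSup <| Set.ext fun _ =>
    ⟨fun ⟨_, h⟩ => h, fun h => ⟨h.elim fun _ ⟨_, _, hP⟩ => hP.nonempty, h⟩⟩

theorem stmt3_general {K : Type u} [Field K] (δ : K → K)
    {n : ℕ} (S₁ S₂ : Set (Fin n → K)) :
    ddim δ (S₁ ∪ S₂) = max (ddim δ S₁) (ddim δ S₂) := by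
  simp only [ddim_eq_sSup, ← sSup_union, DAlgIndepOn.union_iff]
  congr 1
  ext d
  simp only [Set.mem_ofPred_eq, Set.mem_union, exists_or, and_or_left]

/-- `dim (S₁ ∪ S₂) = max (dim S₁) (dim S₂)`. -/
theorem stmt3 {K : Type u} [Field K] [CharZero K] (δ : K → K)
    (hδadd : ∀ a b : K, δ (a + b) = δ a + δ b)
    (hδmul : ∀ a b : K, δ (a * b) = δ a * b + a * δ b)
    (hCK : ∃ a : K, δ a ≠ 0)
    {n : ℕ} (S₁ S₂ : Set (Fin n → K)) :
    ddim δ (S₁ ∪ S₂) = max (ddim δ S₁) (ddim δ S₂) :=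
  stmt3_general δ S₁ S₂
end

section
/- Let y = (y_1,…,y_n) be a tuple of elements of a differential field extension of K, let d be the differential transcendence degree of K⟨y⟩ over K, and let 𝔭 := {P ∈ K{Y_1,…,Y_n} : P(y) = 0}. Then there exist P_1,…,P_{n−d} ∈ 𝔭 that are strongly d-independent at y. -/
open FirstOrder MvPolynomial

universe u

/-!
Let `y_ι` be a differential transcendence basis of `K⟨y⟩`. Every remaining `y_j` satisfies a
relation `F_j(y_ι, y_j) = 0`; one of least total degree has a separant
`∂F_j/∂Y_j^(r_j)` not vanishing at `y`, where `r_j` is the order of `F_j` in `Y_j`. Take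
`r⃗` equal to `r_j` at these `j` and large on `ι`. Column `j` of the Jacobian matrix then vanishes
except in row `j`, since `F_j'` does not involve `Y_j` for `j' ≠ j`, so the `n - d` rows are
independent.
-/

namespace MvPolynomial

variable {σ R A : Type*} [CommSemiring R]

theorem vars_pderiv_subset (i : σ) (p : MvPolynomial σ R) : (pderiv i p).vars ⊆ p.vars := by
  intro u hu
  obtain ⟨m, hm, hum⟩ := (mem_vars_iff_mem_support u).1 hu
  rw [mem_support_iff, coeff_pderiv] at hm
  refine (mem_vars_iff_mem_support u).2
    ⟨m + Finsupp.single i 1, mem_support_iff.2 (left_ne_zero_of_mul hm), ?_⟩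
  rw [Finsupp.mem_support_iff] at hum ⊢
  simp [hum]

theorem totalDegree_pderiv_lt {i : σ} {p : MvPolynomial σ R} (h : pderiv i p ≠ 0) :
    (pderiv i p).totalDegree < p.totalDegree := by
  obtain ⟨m, hm, hdeg⟩ := Finset.exists_mem_eq_sup _ (support_nonempty.2 h)
    fun m : σ →₀ ℕ => m.sum fun _ e => e
  rw [mem_support_iff, coeff_pderiv] at hm
  calc (pderiv i p).totalDegree = m.sum fun _ e => e := hdeg
    _ < (m + Finsupp.single i 1).sum fun _ e => e := by
      rw [Finsupp.sum_add_index' (fun _ => rfl) fun _ _ _ => rfl]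
      simp
    _ ≤ p.totalDegree := le_totalDegree (mem_support_iff.2 (left_ne_zero_of_mul hm))

theorem pderiv_ne_zero_of_mem_vars [NoZeroDivisors R] [CharZero R] {i : σ}
    {p : MvPolynomial σ R} (h : i ∈ p.vars) : pderiv i p ≠ 0 := by
  obtain ⟨m, hm, hi⟩ := (mem_vars_iff_mem_support i).1 h
  have hm' : m - Finsupp.single i 1 + Finsupp.single i 1 = m :=
    tsub_add_cancel_of_le (Finsupp.single_le_iff.2 (Nat.one_le_iff_ne_zero.2
      (Finsupp.mem_support_iff.1 hi)))
  intro h0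
  have hcoeff := congr_arg (coeff (m - Finsupp.single i 1)) h0
  rw [coeff_pderiv, hm', coeff_zero] at hcoeff
  exact mul_ne_zero (mem_support_iff.1 hm) (Nat.cast_add_one_ne_zero _) hcoeff

theorem exists_forall_vars_snd_le {ι m : Type*} [Fintype m] (P : m → MvPolynomial (ι × ℕ) R) :
    ∃ N, ∀ a, ∀ v ∈ (P a).vars, v.2 ≤ N :=
  ⟨Finset.univ.sup fun a => (P a).vars.sup Prod.snd, fun a _ hv =>
    (Finset.le_sup hv).trans (Finset.le_sup (f := fun a => (P a).vars.sup Prod.snd)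
      (Finset.mem_univ a))⟩

variable [NoZeroDivisors R] [CharZero R] [Semiring A]

/-- Take a relation of least total degree: its partial derivatives have smaller degree. -/
theorem exists_relation_forall_pderiv_ne_zero (φ : MvPolynomial σ R →+* A) {U : Set σ}
    (hdep : ¬ ∀ G ∈ supported R U, φ G = 0 → G = 0) :
    ∃ F ∈ supported R U, F ≠ 0 ∧ φ F = 0 ∧ ∀ i ∈ F.vars, φ (pderiv i F) ≠ 0 := by
  push Not at hdep
  set S := {F | F ∈ supported R U ∧ F ≠ 0 ∧ φ F = 0}
  have hS : S.Nonempty := by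
    obtain ⟨G, hG, hG0, hGne⟩ := hdep
    exact ⟨G, hG, hGne, hG0⟩
  obtain ⟨hF, hF0, hφF⟩ := Function.argminOn_mem totalDegree S hS
  set F := Function.argminOn totalDegree S hS
  refine ⟨F, hF, hF0, hφF, fun i hi hφi => ?_⟩
  have hpd : pderiv i F ∈ S :=
    ⟨mem_supported.2 ((Finset.coe_subset.2 (vars_pderiv_subset i F)).trans (mem_supported.1 hF)),
      pderiv_ne_zero_of_mem_vars hi, hφi⟩
  exact Function.not_lt_argminOn totalDegree S hpd
    (totalDegree_pderiv_lt (pderiv_ne_zero_of_mem_vars hi))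

/-- `pderiv (t, r) F` is the separant of `F` with respect to its highest derivative of the
`t`-th differential indeterminate. -/
theorem exists_relation_separant_ne_zero {ι : Type*} (φ : MvPolynomial (ι × ℕ) R →+* A)
    {s : Set ι} {t : ι}
    (hindep : ∀ G ∈ supported R (Prod.fst ⁻¹' s), φ G = 0 → G = 0)
    (hdep : ¬ ∀ G ∈ supported R (Prod.fst ⁻¹' insert t s), φ G = 0 → G = 0) :
    ∃ F ∈ supported R (Prod.fst ⁻¹' insert t s), φ F = 0 ∧
      ∃ r, (∀ v ∈ F.vars, v.1 = t → v.2 ≤ r) ∧ φ (pderiv (t, r) F) ≠ 0 := by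
  classical
  obtain ⟨F, hF, hF0, hφF, hpd⟩ := exists_relation_forall_pderiv_ne_zero φ hdep
  have hT : (F.vars.filter fun v => v.1 = t).Nonempty := by
    by_contra hT
    refine hF0 (hindep F (mem_supported.2 fun v hv => ?_) hφF)
    have hvt : v.1 ∈ insert t s := mem_supported.1 hF hv
    rcases hvt with hvt | hvs
    · exact absurd ⟨v, Finset.mem_filter.2 ⟨hv, hvt⟩⟩ hT
    · exact hvs
  obtain ⟨v, hv, hvr⟩ := Finset.exists_mem_eq_sup _ hT Prod.snd
  obtain ⟨hvF, hvt⟩ := Finset.mem_filter.1 hv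
  refine ⟨F, hF, hφF, v.2, fun w hw hwt => ?_, ?_⟩
  · exact hvr ▸ Finset.le_sup (f := Prod.snd) (Finset.mem_filter.2 ⟨hw, hwt⟩)
  · exact hvt ▸ hpd v hvF

end MvPolynomial

theorem Matrix.rank_eq_card_of_pivots {m n R : Type*} [Fintype m] [Fintype n] [DecidableEq m]
    [Field R] (M : Matrix m n R) (κ : m → n) (hpiv : ∀ a, M a (κ a) ≠ 0)
    (hzero : ∀ a b, a ≠ b → M a (κ b) = 0) : M.rank = Fintype.card m := by
  have hdiag : M.submatrix id κ = Matrix.diagonal fun a => M a (κ a) := by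
    ext a b
    by_cases hab : a = b
    · subst hab; simp
    · simp [Matrix.diagonal_apply_ne _ hab, hzero a b hab]
  have hunit : IsUnit (M.submatrix id κ) := by
    rw [hdiag, Matrix.isUnit_iff_isUnit_det, Matrix.det_diagonal]
    exact (Finset.prod_ne_zero_iff.2 fun a _ => hpiv a).isUnit
  refine le_antisymm M.rank_le_card_height ?_
  calc Fintype.card m = (M.submatrix id κ).rank := (Matrix.rank_of_isUnit _ hunit).symm
    _ ≤ M.rank := M.rank_submatrix_le id κ

section DiffFieldExt

variable {K : Type u} [Field K] {δ : K → K} (E : DiffFieldExt K δ) {n k : ℕ} (y : Fin n → E.L)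

theorem devalExtHom_rename (f : Fin k → Fin n) (F : DiffPoly K k) :
    devalExtHom E y (rename (Prod.map f id) F) = devalExtHom E (y ∘ f) F := by
  simp only [devalExtHom, coe_eval₂Hom, eval₂_rename]
  rfl

theorem dAlgIndepTuple_comp_iff {f : Fin k → Fin n} (hf : Function.Injective f) :
    DAlgIndepTuple E (y ∘ f) ↔
      ∀ G ∈ supported K (Prod.fst ⁻¹' Set.range f), devalExtHom E y G = 0 → G = 0 := by
  have hinj : Function.Injective (Prod.map f (id : ℕ → ℕ)) := hf.prodMap Function.injective_id
  have hrange : Set.range (Prod.map f (id : ℕ → ℕ)) = Prod.fst ⁻¹' Set.range f := by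
    rw [Set.range_prodMap, Set.range_id, Set.prod_univ]
  constructor
  · intro h G hG hG0
    obtain ⟨H, rfl⟩ := exists_rename_eq_of_vars_subset_range G _ hinj
      (hrange ▸ mem_supported.1 hG)
    rw [devalExtHom_rename] at hG0
    by_contra hH
    exact h ⟨H, fun hH0 => hH (by rw [hH0, map_zero]), hG0⟩
  · rintro h ⟨H, hH, hH0⟩
    refine hH (rename_injective _ hinj ?_)
    rw [map_zero]
    refine h _ (mem_supported.2 ?_) ((devalExtHom_rename E y f H).trans hH0)
    rw [← hrange]
    intro v hv
    obtain ⟨w, -, rfl⟩ := Finset.mem_image.1 (vars_rename _ H hv)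
    exact ⟨w, rfl⟩

theorem exists_relation_separant_ne_zero_of_notMem_range [CharZero K] {d : ℕ}
    {ι : Fin d → Fin n} (hι : StrictMono ι) (hind : DAlgIndepTuple E (y ∘ ι))
    (hd2 : ¬ ∃ ι : Fin (d + 1) → Fin n, StrictMono ι ∧ DAlgIndepTuple E (y ∘ ι))
    {j : Fin n} (hj : j ∉ Set.range ι) :
    ∃ F ∈ supported K (Prod.fst ⁻¹' insert j (Set.range ι)), devalExtHom E y F = 0 ∧
      ∃ r, (∀ v ∈ F.vars, v.1 = j → v.2 ≤ r) ∧ devalExtHom E y (pderiv (j, r) F) ≠ 0 := by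
  classical
  have hcard : (insert j (Finset.univ.image ι)).card = d + 1 := by
    rw [Finset.card_insert_of_notMem (by simpa using hj),
      Finset.card_image_of_injective _ hι.injective, Finset.card_fin]
  set ι' := (insert j (Finset.univ.image ι)).orderEmbOfFin hcard
  have hι' : Set.range ι' = insert j (Set.range ι) := by simp [ι']
  exact exists_relation_separant_ne_zero _ ((dAlgIndepTuple_comp_iff E y hι.injective).1 hind)
    (hι' ▸ fun h => hd2 ⟨ι', ι'.strictMono, (dAlgIndepTuple_comp_iff E y ι'.injective).2 h⟩)

theorem strongDIndepAt_of_separant_ne_zero {m : ℕ} (P : Fin m → DiffPoly K n)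
    {κ : Fin m → Fin n} (hκ : Function.Injective κ) {s : Set (Fin n)} (hκs : ∀ a, κ a ∉ s)
    (hP : ∀ a, P a ∈ supported K (Prod.fst ⁻¹' insert (κ a) s)) (r : Fin m → ℕ)
    (hord : ∀ a, ∀ v ∈ (P a).vars, v.1 = κ a → v.2 ≤ r a)
    (hsep : ∀ a, devalExtHom E y (pderiv (κ a, r a) (P a)) ≠ 0) :
    StrongDIndepAt E y P := by
  classical
  obtain ⟨N, hN⟩ := exists_forall_vars_snd_le P
  set rv : Fin n → ℕ := fun j => if h : j ∈ Set.range κ then r h.choose else N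
  have hrv : ∀ a, rv (κ a) = r a := fun a => by
    have h : κ a ∈ Set.range κ := ⟨a, rfl⟩
    simp only [rv, dif_pos h, hκ h.choose_spec]
  refine ⟨rv, fun a => mem_supported.2 fun v hv => ?_, ?_⟩
  · obtain hva | hvs := mem_supported.1 (hP a) hv
    · simpa [hva, hrv] using hord a v hv hva
    · have hvκ : v.1 ∉ Set.range κ := by
        rintro ⟨b, hb⟩
        exact hκs b (hb ▸ hvs)
      have hrvN : rv v.1 = N := dif_neg hvκ
      exact (hN a v hv).trans_eq hrvN.symm
  · refine (Matrix.rank_eq_card_of_pivots _ κ (fun a => ?_) fun a b hab => ?_).trans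
      (Fintype.card_fin _)
    · simpa [hrv, devalExt] using hsep a
    · refine (congr_arg (devalExtHom E y) (pderiv_eq_zero_of_notMem_vars fun hv => ?_)).trans
        (map_zero _)
      obtain hba | hbs := mem_supported.1 (hP a) hv
      · exact hab (hκ hba).symm
      · exact hκs b hbs

end DiffFieldExt

theorem stmt8_general {K : Type u} [Field K] [CharZero K] (δ : K → K)
    (E : DiffFieldExt K δ) {n : ℕ} (y : Fin n → E.L) (d : ℕ)
    (hd1 : ∃ ι : Fin d → Fin n, StrictMono ι ∧ DAlgIndepTuple E (y ∘ ι))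
    (hd2 : ¬ ∃ ι : Fin (d + 1) → Fin n, StrictMono ι ∧ DAlgIndepTuple E (y ∘ ι)) :
    ∃ P : Fin (n - d) → DiffPoly K n,
      (∀ i, P i ∈ RingHom.ker (devalExtHom E y)) ∧ StrongDIndepAt E y P := by
  classical
  obtain ⟨ι, hι, hind⟩ := hd1
  choose F hFsupp hFrel r hFord hFsep using fun j : {j // j ∉ Set.range ι} =>
    exists_relation_separant_ne_zero_of_notMem_range E y hι hind hd2 j.2
  have hcard : Fintype.card {j // j ∉ Set.range ι} = n - d := by
    rw [Fintype.card_subtype_compl, Set.card_range_of_injective hι.injective, Fintype.card_fin,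
      Fintype.card_fin]
  set e := (Fintype.equivFinOfCardEq hcard).symm
  exact ⟨F ∘ e, fun a => hFrel (e a),
    strongDIndepAt_of_separant_ne_zero E y (F ∘ e) (Subtype.val_injective.comp e.injective)
      (fun a => (e a).2) (fun a => hFsupp (e a)) (r ∘ e) (fun a => hFord (e a))
      fun a => hFsep (e a)⟩

/-- If `d` is the differential transcendence degree of `K⟨y⟩` over `K`, then there are
`n - d` differential polynomials vanishing at `y` that are strongly d-independent at `y`. -/
theorem stmt8 {K : Type u} [Field K] [CharZero K] (δ : K → K)
    (hδadd : ∀ a b : K, δ (a + b) = δ a + δ b)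
    (hδmul : ∀ a b : K, δ (a * b) = δ a * b + a * δ b)
    (E : DiffFieldExt K δ) {n : ℕ} (y : Fin n → E.L) (d : ℕ)
    (hd1 : ∃ ι : Fin d → Fin n, StrictMono ι ∧ DAlgIndepTuple E (y ∘ ι))
    (hd2 : ¬ ∃ ι : Fin (d + 1) → Fin n, StrictMono ι ∧ DAlgIndepTuple E (y ∘ ι)) :
    ∃ P : Fin (n - d) → DiffPoly K n,
      (∀ i, P i ∈ RingHom.ker (devalExtHom E y)) ∧ StrongDIndepAt E y P :=
  stmt8_general δ E y d hd1 hd2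
end

section
/- Let F, G ∈ C[Y] be nonzero polynomials, c ∈ C a nonzero constant, and R = R_1/R_2 a nonzero rational function over C (R_1, R_2 ∈ C[Y] nonzero) such that F/G = c·(∂R/∂Y)/R in C(Y). Let b ∈ K, b ≠ 0, satisfy b'/b = 1/c. Then for every y ∈ K with G(y) ≠ 0, R_1(y) ≠ 0, R_2(y) ≠ 0, and F(y)·y' = G(y), the element R(y)/b is a constant, i.e., R(y) ∈ C^×·b. -/
open FirstOrder MvPolynomial

universe u

/-! The quotient `R₁(y)/R₂(y)` and `b` have the same logarithmic derivative `1/c`: for `R(y)` this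
is the chain rule `R(y)' = (∂R/∂Y)(y) · y'` combined with `y' = G(y)/F(y)` and `F/G = c R_Y/R`. -/

namespace Derivation

def ofAddMul {K : Type*} [CommRing K] (δ : K → K) (hδadd : ∀ a b : K, δ (a + b) = δ a + δ b)
    (hδmul : ∀ a b : K, δ (a * b) = δ a * b + a * δ b) : Derivation ℤ K K :=
  mk' (AddMonoidHom.mk' δ hδadd).toIntLinearMap fun a b => by
    simp only [AddMonoidHom.coe_toIntLinearMap, AddMonoidHom.mk'_apply, hδmul, smul_eq_mul]
    ring

@[simp]
theorem coe_ofAddMul {K : Type*} [CommRing K] (δ : K → K) (hδadd hδmul) :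
    ⇑(ofAddMul δ hδadd hδmul) = δ :=
  rfl

theorem apply_eval_of_forall_coeff {R A M : Type*} [CommRing R] [CommRing A] [Algebra R A]
    [AddCommGroup M] [Module A M] [Module R M] (d : Derivation R A M) {p : Polynomial A}
    (hp : ∀ i, d (p.coeff i) = 0) (x : A) :
    d (p.eval x) = (Polynomial.derivative p).eval x • d x := by
  have : d.mapCoeffs p = 0 := by ext i; simp [hp]
  simp [apply_eval_eq, this]

variable {R K : Type*} [CommRing R] [Field K] [Algebra R K] (d : Derivation R K K)

theorem apply_eval_div_eval {p q : Polynomial K} (hp : ∀ i, d (p.coeff i) = 0)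
    (hq : ∀ i, d (q.coeff i) = 0) (x : K) :
    d (p.eval x / q.eval x) = ((Polynomial.derivative p).eval x * q.eval x - p.eval x *
      (Polynomial.derivative q).eval x) * d x / q.eval x ^ 2 := by
  rw [leibniz_div, d.apply_eval_of_forall_coeff hp, d.apply_eval_of_forall_coeff hq]
  simp only [smul_eq_mul]
  ring

theorem apply_div_eq_zero_of_mul_eq {r b c : K} (hr : c * d r = r) (hb : c * d b = b) :
    d (r / b) = 0 := by
  rcases eq_or_ne c 0 with rfl | hc
  · obtain rfl : r = 0 := by simpa using hr.symm
    simp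
  · have hbr : b • d r - r • d b = 0 := by
      refine (mul_eq_zero.1 (?_ : c * _ = 0)).resolve_left hc
      simp only [smul_eq_mul]
      linear_combination b * hr - r * hb
    rw [leibniz_div, hbr, smul_zero]

end Derivation

theorem stmt14_general {K : Type u} [Field K] (δ : K → K)
    (hδadd : ∀ a b : K, δ (a + b) = δ a + δ b)
    (hδmul : ∀ a b : K, δ (a * b) = δ a * b + a * δ b)
    (F G R1 R2 : Polynomial K)
    (hR1c : ∀ i, δ (R1.coeff i) = 0) (hR2c : ∀ i, δ (R2.coeff i) = 0)
    (c : K)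
    (heq : F * (R1 * R2) = Polynomial.C c *
      (G * (Polynomial.derivative R1 * R2 - R1 * Polynomial.derivative R2)))
    (b : K) (hb0 : b ≠ 0) (hb : c * δ b = b) :
    ∀ y : K, Polynomial.eval y G ≠ 0 → Polynomial.eval y R1 ≠ 0 →
      Polynomial.eval y R2 ≠ 0 → Polynomial.eval y F * δ y = Polynomial.eval y G →
      ∃ u : K, u ≠ 0 ∧ δ u = 0 ∧
        Polynomial.eval y R1 / Polynomial.eval y R2 = u * b := by
  intro y hGy hR1y hR2y hFG
  set D := Derivation.ofAddMul δ hδadd hδmul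
  have hcross : R1.eval y * R2.eval y = c * ((Polynomial.derivative R1).eval y * R2.eval y -
      R1.eval y * (Polynomial.derivative R2).eval y) * δ y := by
    have he := congrArg (Polynomial.eval y) heq
    simp only [Polynomial.eval_mul, Polynomial.eval_sub, Polynomial.eval_C] at he
    refine mul_left_cancel₀ hGy ?_
    linear_combination (R1.eval y * R2.eval y) * hFG.symm + δ y * he
  have hlog : c * D (R1.eval y / R2.eval y) = R1.eval y / R2.eval y := by
    rw [D.apply_eval_div_eval hR1c hR2c, Derivation.coe_ofAddMul]
    field_simp
    linear_combination -hcross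
  exact ⟨R1.eval y / R2.eval y / b, by positivity, D.apply_div_eq_zero_of_mul_eq hlog hb,
    by field_simp⟩

/-- If `F/G = c·(∂R/∂Y)/R` in `C(Y)` (written with `R = R₁/R₂` and cross-multiplied) and
`b ≠ 0` satisfies `b′/b = 1/c`, then for every `y` with `F(y)·y′ = G(y)` (and no vanishing
denominators) one has `R(y) ∈ C^× · b`. -/
theorem stmt14 {K : Type u} [Field K] [CharZero K] (δ : K → K)
    (hδadd : ∀ a b : K, δ (a + b) = δ a + δ b)
    (hδmul : ∀ a b : K, δ (a * b) = δ a * b + a * δ b)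
    (F G R1 R2 : Polynomial K) (hF : F ≠ 0) (hG : G ≠ 0) (hR1 : R1 ≠ 0) (hR2 : R2 ≠ 0)
    (hFc : ∀ i, δ (F.coeff i) = 0) (hGc : ∀ i, δ (G.coeff i) = 0)
    (hR1c : ∀ i, δ (R1.coeff i) = 0) (hR2c : ∀ i, δ (R2.coeff i) = 0)
    (c : K) (hc0 : c ≠ 0) (hcC : δ c = 0)
    (heq : F * (R1 * R2) = Polynomial.C c *
      (G * (Polynomial.derivative R1 * R2 - R1 * Polynomial.derivative R2)))
    (b : K) (hb0 : b ≠ 0) (hb : c * δ b = b) :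
    ∀ y : K, Polynomial.eval y G ≠ 0 → Polynomial.eval y R1 ≠ 0 →
      Polynomial.eval y R2 ≠ 0 → Polynomial.eval y F * δ y = Polynomial.eval y G →
      ∃ u : K, u ≠ 0 ∧ δ u = 0 ∧
        Polynomial.eval y R1 / Polynomial.eval y R2 = u * b :=
  stmt14_general δ hδadd hδmul F G R1 R2 hR1c hR2c c heq b hb0 hb
end

section
/- Let F, G ∈ C[Y] be nonzero polynomials with no common factor of positive degree. Suppose either (a) F/G = c·(∂R/∂Y)/R in C(Y) for some nonzero c ∈ C and nonzero R ∈ C(Y), and there exists b ∈ K, b ≠ 0, with b'/b = 1/c; or (b) F/G = ∂R/∂Y in C(Y) for some nonzero R ∈ C(Y), and there exists x ∈ K with x' = 1. Let L be a differential field extension of K and a ∈ L transcendental over K with F(a)·a' = G(a). Then the constant field of the differential subfield K(a, a') of L properly contains C; that is, the differential polynomial P := F(Y)·Y' − G(Y) creates a constant. -/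
open FirstOrder MvPolynomial

universe u

/-!
In case (a) `R₁(a) / (b R₂(a))`, in case (b) `R₁(a) / R₂(a) - x` is a new constant. The
derivative of `R₁(a) / R₂(a)` is `W(a) a' / R₂(a)²` with `W = R₂ R₁' - R₂' R₁` the Wronskian, and
the identity relating `F`, `G` and `W`, evaluated at `a` and combined with `F(a) a' = G(a)`, turns
this into `R₁(a) / (c R₂(a))`, resp. `1`. Neither element lies in `K`: `R₁(a) / R₂(a) ∈ K` would
force `R₁ = k R₂` by transcendence of `a`, hence `W = 0` and then `F = 0`.
-/

namespace Polynomial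

variable {K L : Type*} [CommRing K] [Field L] (f : K →+* L)

theorem eval₂_mem_subfield {S : Subfield L} (hf : ∀ k, f k ∈ S) {x : L} (hx : x ∈ S)
    (P : K[X]) : P.eval₂ f x ∈ S := by
  rw [eval₂_eq_sum_range]
  exact S.sum_mem fun i _ => S.mul_mem (hf _) (S.pow_mem hx i)

theorem eval₂_eq_eval₂_mul_of_mul_eq_mul {F G P Q : K[X]} {x d : L} (hPQ : F * P = G * Q)
    (hG : G.eval₂ f x ≠ 0) (hx : F.eval₂ f x * d = G.eval₂ f x) :
    P.eval₂ f x = Q.eval₂ f x * d := by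
  have h := congrArg (eval₂ f x) hPQ
  rw [eval₂_mul, eval₂_mul] at h
  apply mul_left_cancel₀ hG
  linear_combination d * h - P.eval₂ f x * hx

theorem derivative_mul_sub_mul_derivative_eq_wronskian {R : Type*} [CommRing R] (p q : R[X]) :
    derivative p * q - p * derivative q = wronskian q p := by
  rw [wronskian]
  ring

theorem wronskian_eq_zero_of_eval₂_div_eval₂_eq {x : L}
    (hx : ∀ q : K[X], q.eval₂ f x = 0 → q = 0) {P Q : K[X]} (hQ : Q.eval₂ f x ≠ 0) {k : K}
    (hk : P.eval₂ f x / Q.eval₂ f x = f k) : wronskian Q P = 0 := by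
  have hP : P = k • Q := by
    rw [← sub_eq_zero]
    apply hx
    rw [eval₂_sub, eval₂_smul, ← hk, div_mul_cancel₀ _ hQ, sub_self]
  rw [hP, ← wronskianBilin_apply, map_smul, wronskianBilin_apply, wronskian_self_eq_zero,
    smul_zero]

end Polynomial

namespace Derivation

open Polynomial (wronskian)

section CommRing

variable {R K L : Type*} [CommRing R] [CommRing K] [Field L] [Algebra R L]
  (D : Derivation R L L) (f : K →+* L)

theorem apply_eval₂_of_apply_coeff_eq_zero (x : L) {P : Polynomial K}
    (hP : ∀ i, D (f (P.coeff i)) = 0) :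
    D (P.eval₂ f x) = (Polynomial.derivative P).eval₂ f x * D x := by
  have hP' : D.mapCoeffs (P.map f) = 0 := by
    ext i
    simp [hP]
  rw [Polynomial.eval₂_eq_eval_map, D.apply_eval_eq, hP', map_zero, zero_add,
    Polynomial.derivative_map, ← Polynomial.eval₂_eq_eval_map, smul_eq_mul]

theorem apply_eval₂_div_eval₂ (x : L) {P Q : Polynomial K}
    (hP : ∀ i, D (f (P.coeff i)) = 0) (hQ : ∀ i, D (f (Q.coeff i)) = 0)
    (hQx : Q.eval₂ f x ≠ 0) :
    D (P.eval₂ f x / Q.eval₂ f x) =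
      (wronskian Q P).eval₂ f x * D x / Q.eval₂ f x ^ 2 := by
  rw [leibniz_div, D.apply_eval₂_of_apply_coeff_eq_zero f x hP,
    D.apply_eval₂_of_apply_coeff_eq_zero f x hQ, wronskian, Polynomial.eval₂_sub,
    Polynomial.eval₂_mul, Polynomial.eval₂_mul, smul_eq_mul, smul_eq_mul, smul_eq_mul]
  field_simp

end CommRing

section Field

variable {R K L : Type*} [CommRing R] [Field K] [Field L] [Algebra R L]
  (D : Derivation R L L) {f : K →+* L} {y : L}

theorem exists_new_constant_of_eq_const_mul_logDeriv
    (hy : ∀ q : Polynomial K, q.eval₂ f y = 0 → q = 0) {F G R₁ R₂ : Polynomial K}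
    (hFG : F.eval₂ f y * D y = G.eval₂ f y) (hF : F ≠ 0) (hG : G ≠ 0) (hR₁ : R₁ ≠ 0)
    (hR₂ : R₂ ≠ 0) (hR₁c : ∀ i, D (f (R₁.coeff i)) = 0) (hR₂c : ∀ i, D (f (R₂.coeff i)) = 0)
    {c b : K} (hFR : F * (R₁ * R₂) = Polynomial.C c * (G * wronskian R₂ R₁)) (hb : b ≠ 0)
    (hcb : f c * D (f b) = f b) {S : Subfield L} (hfS : ∀ k, f k ∈ S) (hyS : y ∈ S) :
    ∃ u ∈ S, D u = 0 ∧ u ∉ Set.range f := by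
  have hR₂y : R₂.eval₂ f y ≠ 0 := fun h => hR₂ (hy _ h)
  have hfb : f b ≠ 0 := (map_ne_zero f).2 hb
  have hfc : f c ≠ 0 := left_ne_zero_of_mul (hcb.trans_ne hfb)
  have hW : wronskian R₂ R₁ ≠ 0 := by
    intro h
    rw [h, mul_zero, mul_zero] at hFR
    exact mul_ne_zero hF (mul_ne_zero hR₁ hR₂) hFR
  set v := R₁.eval₂ f y / R₂.eval₂ f y
  have hv : f c * D v = v := by
    have h := Polynomial.eval₂_eq_eval₂_mul_of_mul_eq_mul f
      (hFR.trans (mul_left_comm _ _ _)) (fun h => hG (hy _ h)) hFG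
    rw [Polynomial.eval₂_mul, Polynomial.eval₂_mul, Polynomial.eval₂_C] at h
    rw [D.apply_eval₂_div_eval₂ f y hR₁c hR₂c hR₂y, mul_div_assoc',
      div_eq_div_iff (pow_ne_zero 2 hR₂y) hR₂y]
    linear_combination (-R₂.eval₂ f y) * h
  refine ⟨v / f b, S.div_mem (S.div_mem (Polynomial.eval₂_mem_subfield f hfS hyS R₁)
    (Polynomial.eval₂_mem_subfield f hfS hyS R₂)) (hfS b), ?_, ?_⟩
  · rw [leibniz_div, smul_eq_mul, smul_eq_mul, smul_eq_mul]
    apply mul_eq_zero_of_right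
    apply mul_left_cancel₀ hfc
    linear_combination f b * hv - v * hcb
  · rintro ⟨k, hk⟩
    refine hW (Polynomial.wronskian_eq_zero_of_eval₂_div_eval₂_eq f hy hR₂y (k := k * b) ?_)
    rw [map_mul, hk, div_mul_cancel₀ _ hfb]

theorem exists_new_constant_of_eq_deriv
    (hy : ∀ q : Polynomial K, q.eval₂ f y = 0 → q = 0) {F G R₁ R₂ : Polynomial K}
    (hFG : F.eval₂ f y * D y = G.eval₂ f y) (hF : F ≠ 0) (hG : G ≠ 0)
    (hR₂ : R₂ ≠ 0) (hR₁c : ∀ i, D (f (R₁.coeff i)) = 0) (hR₂c : ∀ i, D (f (R₂.coeff i)) = 0)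
    (hFR : F * R₂ ^ 2 = G * wronskian R₂ R₁) {t : K} (ht : D (f t) = 1)
    {S : Subfield L} (hfS : ∀ k, f k ∈ S) (hyS : y ∈ S) :
    ∃ u ∈ S, D u = 0 ∧ u ∉ Set.range f := by
  have hR₂y : R₂.eval₂ f y ≠ 0 := fun h => hR₂ (hy _ h)
  have hW : wronskian R₂ R₁ ≠ 0 := by
    intro h
    rw [h, mul_zero] at hFR
    exact mul_ne_zero hF (pow_ne_zero 2 hR₂) hFR
  set v := R₁.eval₂ f y / R₂.eval₂ f y
  have hv : D v = 1 := by
    have h := Polynomial.eval₂_eq_eval₂_mul_of_mul_eq_mul f hFR (fun h => hG (hy _ h)) hFG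
    rw [Polynomial.eval₂_pow] at h
    rw [D.apply_eval₂_div_eval₂ f y hR₁c hR₂c hR₂y, ← h, div_self (pow_ne_zero 2 hR₂y)]
  refine ⟨v - f t, S.sub_mem (S.div_mem (Polynomial.eval₂_mem_subfield f hfS hyS R₁)
    (Polynomial.eval₂_mem_subfield f hfS hyS R₂)) (hfS t), ?_, ?_⟩
  · rw [map_sub, hv, ht, sub_self]
  · rintro ⟨k, hk⟩
    refine hW (Polynomial.wronskian_eq_zero_of_eval₂_div_eval₂_eq f hy hR₂y (k := k + t) ?_)
    rw [map_add, hk, sub_add_cancel]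

end Field

end Derivation

namespace DiffFieldExt

variable {K : Type u} [Field K] {δ : K → K} (E : DiffFieldExt K δ)

def derivation : Derivation ℤ E.L E.L :=
  Derivation.mk' (AddMonoidHom.mk' E.derL E.derL_add).toIntLinearMap fun x y => by
    simp [E.derL_mul, add_comm, mul_comm]

theorem derivation_emb (k : K) : E.derivation (E.emb k) = E.emb (δ k) :=
  E.emb_der k

end DiffFieldExt

theorem stmt16_general {K : Type u} [Field K] (δ : K → K)
    (F G : Polynomial K) (hF : F ≠ 0) (hG : G ≠ 0)
    (hcase :
      (∃ (c : K) (R1 R2 : Polynomial K), c ≠ 0 ∧ δ c = 0 ∧ R1 ≠ 0 ∧ R2 ≠ 0 ∧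
        (∀ i, δ (R1.coeff i) = 0) ∧ (∀ i, δ (R2.coeff i) = 0) ∧
        F * (R1 * R2) = Polynomial.C c *
          (G * (Polynomial.derivative R1 * R2 - R1 * Polynomial.derivative R2)) ∧
        ∃ b : K, b ≠ 0 ∧ c * δ b = b) ∨
      (∃ R1 R2 : Polynomial K, R1 ≠ 0 ∧ R2 ≠ 0 ∧
        (∀ i, δ (R1.coeff i) = 0) ∧ (∀ i, δ (R2.coeff i) = 0) ∧
        F * R2 ^ 2 =
          G * (Polynomial.derivative R1 * R2 - R1 * Polynomial.derivative R2) ∧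
        ∃ x : K, δ x = 1))
    (E : DiffFieldExt K δ) (a : E.L)
    (ha_tr : ∀ q : Polynomial K, Polynomial.eval₂ (E.emb : K →+* E.L) a q = 0 → q = 0)
    (ha : Polynomial.eval₂ (E.emb : K →+* E.L) a F * E.derL a =
      Polynomial.eval₂ (E.emb : K →+* E.L) a G) :
    ∃ u ∈ Subfield.closure (Set.range ⇑E.emb ∪ {a, E.derL a}),
      E.derL u = 0 ∧ u ∉ ⇑E.emb '' {c : K | δ c = 0} := by
  set S := Subfield.closure (Set.range ⇑E.emb ∪ {a, E.derL a})
  have hembS : ∀ k, E.emb k ∈ S := fun k => Subfield.subset_closure (Or.inl ⟨k, rfl⟩)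
  have haS : a ∈ S := Subfield.subset_closure (Or.inr (Set.mem_insert a _))
  have hconst (P : Polynomial K) (hP : ∀ i, δ (P.coeff i) = 0) (i : ℕ) :
      E.derivation (E.emb (P.coeff i)) = 0 := by
    rw [E.derivation_emb, hP i, map_zero]
  suffices ∃ u ∈ S, E.derivation u = 0 ∧ u ∉ Set.range E.emb by
    obtain ⟨u, huS, hu, hu_nonconst⟩ := this
    exact ⟨u, huS, hu, fun ⟨k, _, hk⟩ => hu_nonconst ⟨k, hk⟩⟩
  simp only [Polynomial.derivative_mul_sub_mul_derivative_eq_wronskian] at hcase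
  rcases hcase with ⟨c, R1, R2, -, -, hR1, hR2, hR1c, hR2c, hFR, b, hb, hcb⟩ |
    ⟨R1, R2, -, hR2, hR1c, hR2c, hFR, t, ht⟩
  · refine E.derivation.exists_new_constant_of_eq_const_mul_logDeriv ha_tr ha hF hG hR1 hR2
      (hconst R1 hR1c) (hconst R2 hR2c) hFR hb ?_ hembS haS
    rw [E.derivation_emb, ← map_mul, hcb]
  · refine E.derivation.exists_new_constant_of_eq_deriv ha_tr ha hF hG hR2
      (hconst R1 hR1c) (hconst R2 hR2c) hFR (t := t) ?_ hembS haS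
    rw [E.derivation_emb, ht, map_one]

/-- Under hypothesis (a) or (b), the differential polynomial `P = F(Y)·Y′ − G(Y)` creates
a constant: for transcendental `a` with `F(a)·a′ = G(a)` the constant field of `K(a, a′)`
properly contains `C`. -/
theorem stmt16 {K : Type u} [Field K] [CharZero K] (δ : K → K)
    (hδadd : ∀ a b : K, δ (a + b) = δ a + δ b)
    (hδmul : ∀ a b : K, δ (a * b) = δ a * b + a * δ b)
    (F G : Polynomial K) (hF : F ≠ 0) (hG : G ≠ 0)
    (hFc : ∀ i, δ (F.coeff i) = 0) (hGc : ∀ i, δ (G.coeff i) = 0)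
    (hcop : ∀ D : Polynomial K, 0 < D.degree → ¬(D ∣ F ∧ D ∣ G))
    (hcase :
      (∃ (c : K) (R1 R2 : Polynomial K), c ≠ 0 ∧ δ c = 0 ∧ R1 ≠ 0 ∧ R2 ≠ 0 ∧
        (∀ i, δ (R1.coeff i) = 0) ∧ (∀ i, δ (R2.coeff i) = 0) ∧
        F * (R1 * R2) = Polynomial.C c *
          (G * (Polynomial.derivative R1 * R2 - R1 * Polynomial.derivative R2)) ∧
        ∃ b : K, b ≠ 0 ∧ c * δ b = b) ∨
      (∃ R1 R2 : Polynomial K, R1 ≠ 0 ∧ R2 ≠ 0 ∧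
        (∀ i, δ (R1.coeff i) = 0) ∧ (∀ i, δ (R2.coeff i) = 0) ∧
        F * R2 ^ 2 =
          G * (Polynomial.derivative R1 * R2 - R1 * Polynomial.derivative R2) ∧
        ∃ x : K, δ x = 1))
    (E : DiffFieldExt K δ) (a : E.L)
    (ha_tr : ∀ q : Polynomial K, Polynomial.eval₂ (E.emb : K →+* E.L) a q = 0 → q = 0)
    (ha : Polynomial.eval₂ (E.emb : K →+* E.L) a F * E.derL a =
      Polynomial.eval₂ (E.emb : K →+* E.L) a G) :
    ∃ u ∈ Subfield.closure (Set.range ⇑E.emb ∪ {a, E.derL a}),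
      E.derL u = 0 ∧ u ∉ ⇑E.emb '' {c : K | δ c = 0} :=
  stmt16_general δ F G hF hG hcase E a ha_tr ha
end

section
/- Let P ∈ K[Y,Y'] be irreducible of order 1 (i.e., irreducible in the polynomial ring K[Y,Y'] in two indeterminates, with deg_{Y'} P ≥ 1), and suppose Z(P) := {y ∈ K : P(y, y') = 0} is infinite. Then for every Q ∈ K[Y,Y']: Z(P) ⊆ Z(Q) if and only if Q ∈ P·K[Y,Y']. -/
open FirstOrder MvPolynomial

universe u

/-!
Write `K[Y, Y']` as `K[Y][Y']`. There `P` is irreducible of positive degree, hence primitive,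
so by Gauss's lemma `P ∤ Q` makes `P` and `Q` coprime over `K(Y)`. Their resultant `r ∈ K[Y]`
is then nonzero and of the form `A P + B Q`, so it vanishes at every `y ∈ Z(P) ⊆ Z(Q)`:
infinitely many roots force `r = 0`, a contradiction.
-/

namespace MvPolynomial

variable (R : Type*) [CommSemiring R]

noncomputable def bivariateEquiv : MvPolynomial (Fin 2) R ≃ₐ[R] Polynomial (Polynomial R) :=
  (renameEquiv R (Equiv.swap 0 1)).trans <|
    (finSuccEquiv R 1).trans (Polynomial.mapAlgEquiv (uniqueAlgEquiv R (Fin 1)))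

variable {R}

@[simp]
theorem bivariateEquiv_X_zero : bivariateEquiv R (X 0) = Polynomial.C Polynomial.X := by
  rw [bivariateEquiv, AlgEquiv.trans_apply, AlgEquiv.trans_apply, renameEquiv_apply, rename_X,
    Equiv.swap_apply_left, ← Fin.succ_zero_eq_one, finSuccEquiv_X_succ,
    Polynomial.coe_mapAlgEquiv, Polynomial.map_C]
  simp

@[simp]
theorem bivariateEquiv_X_one : bivariateEquiv R (X 1) = Polynomial.X := by
  rw [bivariateEquiv, AlgEquiv.trans_apply, AlgEquiv.trans_apply, renameEquiv_apply, rename_X,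
    Equiv.swap_apply_right, finSuccEquiv_X_zero, Polynomial.coe_mapAlgEquiv, Polynomial.map_X]

@[simp]
theorem bivariateEquiv_C (a : R) : bivariateEquiv R (C a) = Polynomial.C (Polynomial.C a) :=
  (bivariateEquiv R).commutes a

theorem eval_bivariateEquiv (y y' : R) (F : MvPolynomial (Fin 2) R) :
    ((bivariateEquiv R F).eval (Polynomial.C y')).eval y = eval ![y, y'] F := by
  induction F using MvPolynomial.induction_on with
  | C a => simp
  | add p q hp hq => simp [hp, hq]
  | mul_X p i hp => fin_cases i <;> simp [hp]

theorem natDegree_bivariateEquiv (F : MvPolynomial (Fin 2) R) :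
    (bivariateEquiv R F).natDegree = degreeOf 1 F := by
  have h := degreeOf_rename_of_injective (p := F) (Equiv.swap (0 : Fin 2) 1).injective 1
  rw [Equiv.swap_apply_right] at h
  rw [bivariateEquiv, AlgEquiv.trans_apply, AlgEquiv.trans_apply, Polynomial.coe_mapAlgEquiv,
    Polynomial.natDegree_map_eq_of_injective (uniqueAlgEquiv R (Fin 1)).injective,
    natDegree_finSuccEquiv, renameEquiv_apply, h]

end MvPolynomial

namespace Polynomial

theorem exists_mul_add_mul_eq_C_of_not_dvd {R : Type*} [CommRing R] [IsDomain R] [IsGCDMonoid R]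
    {p q : R[X]} (hp : Irreducible p) (hdeg : p.natDegree ≠ 0) (hpq : ¬p ∣ q) :
    ∃ a b : R[X], ∃ r ≠ 0, p * a + q * b = C r := by
  let F := FractionRing R
  have hinj : Function.Injective (algebraMap R F) := IsFractionRing.injective R F
  have hprim := hp.isPrimitive hdeg
  have hcop : IsCoprime (p.map (algebraMap R F)) (q.map (algebraMap R F)) :=
    (hprim.irreducible_iff_irreducible_map_fraction_map.mp hp).coprime_iff_not_dvd.mpr
      (mt (hprim.dvd_iff_fraction_map_dvd_fraction_map F).mpr hpq)
  have hres : p.resultant q ≠ 0 := by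
    have := resultant_ne_zero _ _ hcop
    rwa [natDegree_map_eq_of_injective hinj, natDegree_map_eq_of_injective hinj,
      resultant_map_map, map_ne_zero_iff _ hinj] at this
  obtain ⟨a, b, -, -, h⟩ := exists_mul_add_mul_eq_C_resultant p q le_rfl le_rfl (Or.inl hdeg)
  exact ⟨a, b, _, hres, h⟩

end Polynomial

namespace MvPolynomial

theorem dvd_of_infinite_zeroSet_subset {K : Type*} [Field K] (f : K → K)
    {P Q : MvPolynomial (Fin 2) K} (hP : Irreducible P) (hdeg : 1 ≤ degreeOf 1 P)
    (hinf : {y | eval ![y, f y] P = 0}.Infinite)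
    (hsub : {y | eval ![y, f y] P = 0} ⊆ {y | eval ![y, f y] Q = 0}) : P ∣ Q := by
  by_contra hPQ
  obtain ⟨a, b, r, hr, h⟩ :=
    Polynomial.exists_mul_add_mul_eq_C_of_not_dvd (hP.map (bivariateEquiv K))
      (by rw [natDegree_bivariateEquiv]; omega) (mt (map_dvd_iff (bivariateEquiv K)).mp hPQ)
  refine hr (Polynomial.eq_zero_of_infinite_isRoot r (hinf.mono fun y hy => ?_))
  have hQ : eval ![y, f y] Q = 0 := hsub hy
  have := congrArg (fun F => (F.eval (Polynomial.C (f y))).eval y) h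
  simp only [Polynomial.eval_add, Polynomial.eval_mul, eval_bivariateEquiv, hy.out, hQ,
    Polynomial.eval_C, zero_mul, add_zero] at this
  exact this.symm

end MvPolynomial

theorem stmt17_general {K : Type u} [Field K] (δ : K → K)
    (P : MvPolynomial (Fin 2) K) (hirr : Irreducible P)
    (hord : 1 ≤ MvPolynomial.degreeOf (1 : Fin 2) P)
    (hinf : {y : K | MvPolynomial.eval ![y, δ y] P = 0}.Infinite) :
    ∀ Q : MvPolynomial (Fin 2) K,
      {y : K | MvPolynomial.eval ![y, δ y] P = 0} ⊆
        {y : K | MvPolynomial.eval ![y, δ y] Q = 0} ↔ P ∣ Q := by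
  intro Q
  refine ⟨dvd_of_infinite_zeroSet_subset δ hirr hord hinf, ?_⟩
  rintro ⟨S, rfl⟩ y hy
  simp [hy.out]

/-- If `P ∈ K[Y,Y′]` is irreducible of order 1 with `Z(P)` infinite, then for all
`Q ∈ K[Y,Y′]`: `Z(P) ⊆ Z(Q)` iff `Q ∈ P·K[Y,Y′]`. -/
theorem stmt17 {K : Type u} [Field K] [CharZero K] (δ : K → K)
    (hδadd : ∀ a b : K, δ (a + b) = δ a + δ b)
    (hδmul : ∀ a b : K, δ (a * b) = δ a * b + a * δ b)
    (P : MvPolynomial (Fin 2) K) (hirr : Irreducible P)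
    (hord : 1 ≤ MvPolynomial.degreeOf (1 : Fin 2) P)
    (hinf : {y : K | MvPolynomial.eval ![y, δ y] P = 0}.Infinite) :
    ∀ Q : MvPolynomial (Fin 2) K,
      {y : K | MvPolynomial.eval ![y, δ y] P = 0} ⊆
        {y : K | MvPolynomial.eval ![y, δ y] Q = 0} ↔ P ∣ Q :=
  stmt17_general δ P hirr hord hinf
end

section
/- Let P ∈ K[Y,Y'] be irreducible of order 1 (irreducible in K[Y,Y'] with deg_{Y'} P ≥ 1), and suppose Z(P) := {y ∈ K : P(y, y') = 0} is infinite. Then there exist an elementary extension K* of K (in the language of differential rings) and an element a ∈ K* such that P(a, a') = 0 and Q(a, a') ≠ 0 for every nonzero Q ∈ K[Y,Y'] with deg_{Y'} Q < deg_{Y'} P; in particular, a is transcendental over K and P is a minimal annihilator of a over K. -/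
open FirstOrder MvPolynomial

universe u

/-!
For a nonzero `Q` with `deg_{Y'} Q < deg_{Y'} P`, irreducibility of `P` (and Gauss's lemma) makes
`P` and `Q` coprime as polynomials in `Y'` over `K(Y)`, so their resultant in `Y'` is a nonzero
polynomial in `Y` that vanishes at the first coordinate of every common zero. Hence
`Z(P) ∩ Z(Q)` is finite, and since `Z(P)` is infinite the sets `Z(P) \ Z(Q)` have the finite
intersection property. An ultrapower of `K` along an ultrafilter refining this family is an
elementary extension by Łoś's theorem, and the class of a sequence of witnesses is the required
`a`. Transcendence is the special case `Q ∈ K[Y]`, of `Y'`-degree `0`.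
-/

namespace Polynomial

theorem resultant_ne_zero_of_irreducible_of_natDegree_lt {A : Type*} [CommRing A] [IsDomain A]
    [IsGCDMonoid A] {p q : A[X]} (hp : Irreducible p) (hq : q ≠ 0)
    (hdeg : q.natDegree < p.natDegree) : p.resultant q ≠ 0 := by
  let F := FractionRing A
  have hinj : Function.Injective (algebraMap A F) := IsFractionRing.injective A F
  have hpF : Irreducible (p.map (algebraMap A F)) :=
    (hp.isPrimitive (by omega)).irreducible_iff_irreducible_map_fraction_map.mp hp
  have hndvd : ¬ p.map (algebraMap A F) ∣ q.map (algebraMap A F) := fun h => by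
    have := natDegree_le_of_dvd h ((Polynomial.map_ne_zero_iff hinj).mpr hq)
    rw [natDegree_map_eq_of_injective hinj, natDegree_map_eq_of_injective hinj] at this
    omega
  have hF := resultant_ne_zero _ _ (hpF.coprime_iff_not_dvd.mpr hndvd)
  rw [natDegree_map_eq_of_injective hinj, natDegree_map_eq_of_injective hinj,
    resultant_map_map] at hF
  exact fun h => hF (by rw [h, map_zero])

namespace Bivariate

variable {R : Type*} [CommSemiring R]

theorem finSuccEquiv_rename_swap_equivMvPolynomial (p : R[X][Y]) :
    MvPolynomial.finSuccEquiv R 1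
        (MvPolynomial.rename (Equiv.swap 0 1) (equivMvPolynomial R p)) =
      p.map (toMvPolynomial (R := R) (0 : Fin 1)) := by
  change (((MvPolynomial.finSuccEquiv R 1).toAlgHom.comp
    (MvPolynomial.rename (Equiv.swap 0 1))).comp (equivMvPolynomial R).toAlgHom) p =
      mapAlgHom (toMvPolynomial (R := R) (0 : Fin 1)) p
  congr 1
  refine algHom_ext' (algHom_ext ?_) ?_
  · simpa using MvPolynomial.finSuccEquiv_X_succ (R := R) (j := (0 : Fin 1))
  · simp [MvPolynomial.finSuccEquiv_X_zero]

theorem degreeOf_one_equivMvPolynomial (p : R[X][Y]) :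
    (equivMvPolynomial R p).degreeOf 1 = p.natDegree := by
  rw [← MvPolynomial.degreeOf_rename_of_injective (Equiv.swap (0 : Fin 2) 1).injective,
    Equiv.swap_apply_right, ← MvPolynomial.natDegree_finSuccEquiv,
    finSuccEquiv_rename_swap_equivMvPolynomial]
  exact natDegree_map_eq_of_injective (toMvPolynomial_injective _) p

theorem eval_equivMvPolynomial (x y : R) (p : R[X][Y]) :
    (equivMvPolynomial R p).eval ![x, y] = p.evalEval x y := by
  change ((MvPolynomial.eval ![x, y]).comp (equivMvPolynomial R).toRingHom) p =
    evalEvalRingHom x y p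
  congr 1
  ext <;> simp

end Bivariate

end Polynomial

namespace MvPolynomial

open Polynomial Bivariate

theorem finite_setOf_exists_eval_eq_zero_of_degreeOf_lt {K : Type*} [Field K]
    {P Q : MvPolynomial (Fin 2) K} (hP : Irreducible P) (hQ : Q ≠ 0)
    (hdeg : Q.degreeOf 1 < P.degreeOf 1) :
    {x : K | ∃ y, P.eval ![x, y] = 0 ∧ Q.eval ![x, y] = 0}.Finite := by
  obtain ⟨p, rfl⟩ := (equivMvPolynomial K).surjective P
  obtain ⟨q, rfl⟩ := (equivMvPolynomial K).surjective Q
  rw [degreeOf_one_equivMvPolynomial, degreeOf_one_equivMvPolynomial] at hdeg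
  have hres := resultant_ne_zero_of_irreducible_of_natDegree_lt
    ((MulEquiv.irreducible_iff _).mp hP) (by simpa using hQ) hdeg
  obtain ⟨u, v, -, -, huv⟩ :=
    exists_mul_add_mul_eq_C_resultant p q le_rfl le_rfl (Or.inl (by omega))
  refine (finite_setOfPred_isRoot hres).subset ?_
  rintro x ⟨y, hp, hq⟩
  rw [eval_equivMvPolynomial] at hp hq
  simpa [hp, hq, evalEval_C] using congr_arg (evalEval x y) huv.symm

theorem eval₂_toMvPolynomial {R S σ : Type*} [CommSemiring R] [CommSemiring S]
    (f : R →+* S) (g : σ → S) (i : σ) (q : R[X]) :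
    (q.toMvPolynomial i).eval₂ f g = q.eval₂ f (g i) := by
  induction q using Polynomial.induction_on <;> simp_all

theorem degreeOf_toMvPolynomial_of_ne {R σ : Type*} [CommSemiring R] {i j : σ} (h : j ≠ i)
    (q : R[X]) : (q.toMvPolynomial i).degreeOf j = 0 := by
  rw [← Nat.le_zero]
  induction q using Polynomial.induction_on with
  | C a => simp
  | add p q hp hq => simpa using (degreeOf_add_le j _ _).trans (max_le hp hq)
  | monomial n a _ =>
    simpa [degreeOf_X_pow_of_ne _ h] using degreeOf_C_mul_le (X i ^ (n + 1)) j a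

end MvPolynomial

section DiffZeroSet

variable {K : Type*} [Field K]

def diffZeroSet (δ : K → K) (Q : MvPolynomial (Fin 2) K) : Set K :=
  {y | MvPolynomial.eval ![y, δ y] Q = 0}

theorem finite_diffZeroSet_inter (δ : K → K) {P Q : MvPolynomial (Fin 2) K}
    (hP : Irreducible P) (hQ : Q ≠ 0) (hdeg : Q.degreeOf 1 < P.degreeOf 1) :
    (diffZeroSet δ P ∩ diffZeroSet δ Q).Finite :=
  (MvPolynomial.finite_setOf_exists_eval_eq_zero_of_degreeOf_lt hP hQ hdeg).subset
    fun y hy => ⟨δ y, hy⟩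

theorem nonempty_diffZeroSet_diff_biUnion (δ : K → K) {P : MvPolynomial (Fin 2) K}
    (hP : Irreducible P) (hinf : (diffZeroSet δ P).Infinite) {ι : Type*} (s : Finset ι)
    (Q : ι → MvPolynomial (Fin 2) K)
    (hQ : ∀ i ∈ s, Q i ≠ 0 ∧ (Q i).degreeOf 1 < P.degreeOf 1) :
    (diffZeroSet δ P \ ⋃ i ∈ s, diffZeroSet δ (Q i)).Nonempty := by
  have hfin : (⋃ i ∈ s, diffZeroSet δ P ∩ diffZeroSet δ (Q i)).Finite :=
    s.finite_toSet.biUnion fun i hi => finite_diffZeroSet_inter δ hP (hQ i hi).1 (hQ i hi).2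
  obtain ⟨y, hyP, hyQ⟩ := (hinf.sdiff hfin).nonempty
  refine ⟨y, hyP, fun hy => hyQ ?_⟩
  simp only [Set.mem_iUnion] at hy ⊢
  obtain ⟨i, hi, hyi⟩ := hy
  exact ⟨i, hi, hyP, hyi⟩

end DiffZeroSet

section Ultrapower

open Filter FirstOrder.Language

theorem exists_ultrafilter_eventually_notMem {X ι : Type*} (B : Set X) (C : ι → Set X)
    (h : ∀ s : Finset ι, (B \ ⋃ i ∈ s, C i).Nonempty) :
    ∃ (U : Ultrafilter (Finset ι)) (y : Finset ι → X), (∀ s, y s ∈ B) ∧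
      ∀ i, ∀ᶠ s in (U : Filter (Finset ι)), y s ∉ C i := by
  choose y hy using h
  refine ⟨.of atTop, y, fun s => (hy s).1, fun i => ?_⟩
  filter_upwards [Ultrafilter.of_le atTop (eventually_ge_atTop {i})] with s hs
  exact fun hi => (hy s).2 (Set.mem_biUnion (Finset.singleton_subset_iff.mp hs) hi)

theorem Filter.Germ.eval₂_coe {I σ K : Type*} [CommSemiring K] {l : Filter I}
    (x : I → σ → K) (R : MvPolynomial σ K) :
    R.eval₂ ((Germ.coeRingHom l).comp (Pi.constRingHom I K))
        (fun s => ((fun i => x i s : I → K) : Germ l K)) =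
      ↑(fun i => R.eval (x i)) := by
  induction R using MvPolynomial.induction_on with
  | C a => simp only [MvPolynomial.eval₂_C, MvPolynomial.eval_C]; rfl
  | add p q hp hq => simp only [MvPolynomial.eval₂_add, MvPolynomial.eval_add, hp, hq]; rfl
  | mul_X p s hp =>
    simp only [MvPolynomial.eval₂_mul, MvPolynomial.eval_mul, hp, MvPolynomial.eval₂_X,
      MvPolynomial.eval_X]
    rfl

variable {K : Type u} [Field K] {I : Type u} (U : Ultrafilter I)

theorem dStructure_germ_map_eq_ultraproduct (δ : K → K) :
    dStructure (Germ.map δ : Germ (U : Filter I) K → _) =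
      (@Ultraproduct.structure I (fun _ => K) U dLang (fun _ => dStructure δ) :
        dLang.Structure (Germ (U : Filter I) K)) := by
  refine Structure.ext (funext fun n => funext fun f => funext fun v => ?_)
    (funext fun _ => funext fun r => r.elim)
  obtain ⟨x, rfl⟩ : ∃ x : Fin n → I → K, (fun i => (x i : Germ (U : Filter I) K)) = v :=
    ⟨fun i => Quotient.out (v i), funext fun i => Quotient.out_eq (v i)⟩
  refine Eq.trans ?_ (@Ultraproduct.funMap_cast I (fun _ => K) U dLang
    (fun _ => dStructure δ) n f x).symm
  match n, f with
  | 0, ⟨0, _⟩ | 0, ⟨1, _⟩ | 1, ⟨0, _⟩ | 1, ⟨1, _⟩ => rfl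
  | 2, ⟨0, _⟩ | 2, ⟨1, _⟩ => rfl

variable {δ : K → K} (hadd : ∀ a b, δ (a + b) = δ a + δ b)
  (hmul : ∀ a b, δ (a * b) = δ a * b + a * δ b)

noncomputable def DiffElemExt.ultrapower : DiffElemExt K δ where
  L := Germ (U : Filter I) K
  derL := Germ.map δ
  derL_add p q := Germ.inductionOn₂ p q fun f g =>
    congrArg Germ.ofFun (funext fun i => hadd (f i) (g i))
  derL_mul p q := Germ.inductionOn₂ p q fun f g =>
    congrArg Germ.ofFun (funext fun i => hmul (f i) (g i))
  emb := (Germ.coeRingHom (U : Filter I)).comp (Pi.constRingHom I K)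
  emb_der _ := rfl
  elementary φ v := by
    rw [dStructure_germ_map_eq_ultraproduct]
    have h := @Ultraproduct.realize_formula_cast I (fun _ => K) U dLang
      (fun _ => dStructure δ) (fun _ => inferInstance) _ φ fun i _ => v i
    rwa [eventually_const] at h

noncomputable def DiffElemExt.ultrapowerMk (y : I → K) : (ultrapower U hadd hmul).L :=
  (y : Germ (U : Filter I) K)

theorem DiffElemExt.ultrapowerMk_eq_zero_iff (y : I → K) :
    ultrapowerMk U hadd hmul y = 0 ↔ ∀ᶠ i in (U : Filter I), y i = 0 :=
  Germ.coe_eq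

theorem DiffElemExt.eval₂_ultrapowerMk (y : I → K) (Q : MvPolynomial (Fin 2) K) :
    Q.eval₂ (ultrapower U hadd hmul).emb
        ![ultrapowerMk U hadd hmul y,
          (ultrapower U hadd hmul).derL (ultrapowerMk U hadd hmul y)] =
      ultrapowerMk U hadd hmul fun i => MvPolynomial.eval ![y i, δ (y i)] Q := by
  have hjet : ![(y : Germ (U : Filter I) K), Germ.map δ y] =
      fun j => ((fun i => ![y i, δ (y i)] j : I → K) : Germ (U : Filter I) K) := by
    funext j
    fin_cases j <;> rfl
  change Q.eval₂ ((Germ.coeRingHom _).comp (Pi.constRingHom I K))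
    ![(y : Germ (U : Filter I) K), Germ.map δ y] = _
  rw [hjet]
  exact Germ.eval₂_coe _ Q

end Ultrapower

theorem stmt18_general {K : Type u} [Field K] (δ : K → K)
    (hδadd : ∀ a b : K, δ (a + b) = δ a + δ b)
    (hδmul : ∀ a b : K, δ (a * b) = δ a * b + a * δ b)
    (P : MvPolynomial (Fin 2) K) (hirr : Irreducible P)
    (hord : 1 ≤ MvPolynomial.degreeOf (1 : Fin 2) P)
    (hinf : {y : K | MvPolynomial.eval ![y, δ y] P = 0}.Infinite) :
    ∃ (E : DiffElemExt K δ) (a : E.L),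
      MvPolynomial.eval₂ (E.emb : K →+* E.L) ![a, E.derL a] P = 0 ∧
      (∀ Q : MvPolynomial (Fin 2) K, Q ≠ 0 →
        MvPolynomial.degreeOf (1 : Fin 2) Q < MvPolynomial.degreeOf (1 : Fin 2) P →
        MvPolynomial.eval₂ (E.emb : K →+* E.L) ![a, E.derL a] Q ≠ 0) ∧
      (∀ q : Polynomial K, q ≠ 0 → Polynomial.eval₂ (E.emb : K →+* E.L) a q ≠ 0) := by
  let Small := {Q : MvPolynomial (Fin 2) K // Q ≠ 0 ∧ Q.degreeOf 1 < P.degreeOf 1}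
  obtain ⟨U, y, hyP, hyQ⟩ := exists_ultrafilter_eventually_notMem (diffZeroSet δ P)
    (fun Q : Small => diffZeroSet δ Q.1)
    fun s => nonempty_diffZeroSet_diff_biUnion δ hirr hinf s _ fun Q _ => Q.2
  let E := DiffElemExt.ultrapower U hδadd hδmul
  let a := DiffElemExt.ultrapowerMk U hδadd hδmul y
  have hsmall (Q : MvPolynomial (Fin 2) K) (hQ : Q ≠ 0) (hdeg : Q.degreeOf 1 < P.degreeOf 1) :
      Q.eval₂ E.emb ![a, E.derL a] ≠ 0 := by
    rw [DiffElemExt.eval₂_ultrapowerMk, Ne, DiffElemExt.ultrapowerMk_eq_zero_iff]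
    intro hzero
    obtain ⟨s, hs, hs0⟩ := ((hyQ ⟨Q, hQ, hdeg⟩).and hzero).exists
    exact hs hs0
  refine ⟨E, a, ?_, hsmall, fun q hq => ?_⟩
  · rw [DiffElemExt.eval₂_ultrapowerMk, DiffElemExt.ultrapowerMk_eq_zero_iff]
    exact Filter.Eventually.of_forall hyP
  · have h := hsmall (q.toMvPolynomial 0)
      ((Polynomial.toMvPolynomial_injective 0).ne hq |>.trans_eq (map_zero _))
      (by rw [MvPolynomial.degreeOf_toMvPolynomial_of_ne (by decide)]; omega)
    rwa [MvPolynomial.eval₂_toMvPolynomial] at h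

/-- If `P ∈ K[Y,Y′]` is irreducible of order 1 with `Z(P)` infinite, there is an elementary
extension `K*` of `K` and `a ∈ K*` with `P(a,a′) = 0` and `Q(a,a′) ≠ 0` for all nonzero `Q`
with `deg_{Y′} Q < deg_{Y′} P`; in particular `a` is transcendental over `K`. -/
theorem stmt18 {K : Type u} [Field K] [CharZero K] (δ : K → K)
    (hδadd : ∀ a b : K, δ (a + b) = δ a + δ b)
    (hδmul : ∀ a b : K, δ (a * b) = δ a * b + a * δ b)
    (P : MvPolynomial (Fin 2) K) (hirr : Irreducible P)
    (hord : 1 ≤ MvPolynomial.degreeOf (1 : Fin 2) P)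
    (hinf : {y : K | MvPolynomial.eval ![y, δ y] P = 0}.Infinite) :
    ∃ (E : DiffElemExt K δ) (a : E.L),
      MvPolynomial.eval₂ (E.emb : K →+* E.L) ![a, E.derL a] P = 0 ∧
      (∀ Q : MvPolynomial (Fin 2) K, Q ≠ 0 →
        MvPolynomial.degreeOf (1 : Fin 2) Q < MvPolynomial.degreeOf (1 : Fin 2) P →
        MvPolynomial.eval₂ (E.emb : K →+* E.L) ![a, E.derL a] Q ≠ 0) ∧
      (∀ q : Polynomial K, q ≠ 0 → Polynomial.eval₂ (E.emb : K →+* E.L) a q ≠ 0) :=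
  stmt18_general δ hδadd hδmul P hirr hord hinf
end
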